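/- arXiv:2407.20008 — 2 statements merged into one kernel-verified Lean document; each statement's English description precedes it below -/
import Mathlib

section
/- For every positive integer m, the poset L(m,2) admits a symmetric chain decomposition: there is a partition of the underlying set of L(m,2) into saturated chains such that each chain, with minimum element x and maximum element y, satisfies |x| + |y| = 2m. -/
/-!
An element of `L(m,2)` is determined by its two column lengths `a ≥ b`, and its size is `a + b`.
Put it on the chain `k = min b (m - a)`: that chain starts at column lengths `(k, k)`, grows the
first column to `m - k` and then the second column to `m - k`, one box per step, so its ends have
sizes `2k` and `2m - 2k`.
-/

/-- The finite Young lattice `L(m,n)`. -/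
def YoungL (m n : ℕ) := {f : Fin m → ℕ // Antitone f ∧ ∀ i, f i ≤ n}

instance (m n : ℕ) : PartialOrder (YoungL m n) :=
  Subtype.partialOrder _

open Finset

theorem CovBy.of_strictMono_of_eq_add_one {α : Type*} [PartialOrder α] {f : α → ℕ}
    (hf : StrictMono f) {a b : α} (hab : a ≤ b) (h : f b = f a + 1) : a ⋖ b := by
  refine ⟨hab.lt_of_ne ?_, fun c hac hcb => ?_⟩
  · rintro rfl
    omega
  · have := hf hac
    have := hf hcb
    omega

theorem Fin.lt_card_filter_iff_of_antitone {m : ℕ} {p : Fin m → Prop} [DecidablePred p]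
    (hp : ∀ ⦃i j⦄, i ≤ j → p j → p i) (i : Fin m) : p i ↔ (i : ℕ) < #{j | p j} := by
  constructor
  · intro hi
    have hsub : Iic i ⊆ ({j | p j} : Finset (Fin m)) := fun j hj => by
      simpa using hp (mem_Iic.mp hj) hi
    simpa using card_le_card hsub
  · intro hi
    by_contra hni
    have hsub : ({j | p j} : Finset (Fin m)) ⊆ Iio i := fun j hj => by
      simp only [mem_filter, mem_univ, true_and] at hj
      exact mem_Iio.mpr (lt_of_not_ge fun hij => hni (hp hij hj))
    simpa using (card_le_card hsub).trans_lt' hi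

namespace YoungL

variable {m n : ℕ}

/-- Column lengths, 0-indexed as in `YoungDiagram.colLen`. -/
def colLen (x : YoungL m n) (j : ℕ) : ℕ := #{i | j < x.1 i}

theorem lt_apply_iff_lt_colLen (x : YoungL m n) (i : Fin m) (j : ℕ) :
    j < x.1 i ↔ (i : ℕ) < colLen x j :=
  Fin.lt_card_filter_iff_of_antitone (p := fun i => j < x.1 i)
    (fun _ _ hij hj => hj.trans_le (x.2.1 hij)) i

theorem sum_eq_sum_colLen (x : YoungL m n) :
    ∑ i, x.1 i = ∑ j ∈ range n, colLen x j := by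
  have hrow : ∀ i, x.1 i = ∑ j ∈ range n, if j < x.1 i then 1 else 0 := fun i => by
    rw [← card_filter, show {j ∈ range n | j < x.1 i} = range (x.1 i) by
      ext j; simp only [mem_filter, mem_range]; have := x.2.2 i; omega, card_range]
  simp_rw [colLen, card_filter]
  rw [sum_comm, ← sum_congr rfl fun i _ => hrow i]

theorem sum_strictMono : StrictMono fun x : YoungL m n => ∑ i, x.1 i :=
  Fintype.sum_strictMono.comp (Subtype.strictMono_coe _)

def ofColLens (m a b : ℕ) : YoungL m 2 :=
  ⟨fun i => if (i : ℕ) < b then 2 else if (i : ℕ) < a then 1 else 0,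
    fun i j (hij : (i : ℕ) ≤ j) => by dsimp only; split_ifs <;> omega,
    fun i => by dsimp only; split_ifs <;> omega⟩

theorem ofColLens_apply (a b : ℕ) (i : Fin m) :
    (ofColLens m a b).1 i = if (i : ℕ) < b then 2 else if (i : ℕ) < a then 1 else 0 := rfl

theorem ofColLens_le_ofColLens {a b a' b' : ℕ} (ha : a ≤ a') (hb : b ≤ b') :
    ofColLens m a b ≤ ofColLens m a' b' := fun i => by
  simp only [ofColLens_apply]
  split_ifs <;> omega

theorem colLen_ofColLens_zero {a b : ℕ} (hba : b ≤ a) (ham : a ≤ m) :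
    colLen (ofColLens m a b) 0 = a := by
  rw [colLen, filter_congr fun i _ => show 0 < (ofColLens m a b).1 i ↔ (i : ℕ) < a by
    rw [ofColLens_apply]; split_ifs <;> omega, Fin.card_filter_val_lt, min_eq_right ham]

theorem colLen_ofColLens_one {a b : ℕ} (hbm : b ≤ m) :
    colLen (ofColLens m a b) 1 = b := by
  rw [colLen, filter_congr fun i _ => show 1 < (ofColLens m a b).1 i ↔ (i : ℕ) < b by
    rw [ofColLens_apply]; split_ifs <;> omega, Fin.card_filter_val_lt, min_eq_right hbm]

theorem colLen_antitone (x : YoungL m n) : Antitone (colLen x) := fun _ _ hjk =>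
  card_le_card (monotone_filter_right _ fun _ _ => hjk.trans_lt)

theorem colLen_le (x : YoungL m n) (j : ℕ) : colLen x j ≤ m :=
  (card_filter_le _ _).trans_eq (card_fin m)

theorem eq_ofColLens (x : YoungL m 2) : x = ofColLens m (colLen x 0) (colLen x 1) := by
  refine Subtype.ext (funext fun i => ?_)
  have h0 := lt_apply_iff_lt_colLen x i 0
  have h1 := lt_apply_iff_lt_colLen x i 1
  have h2 := x.2.2 i
  rw [ofColLens_apply]
  split_ifs <;> omega

theorem sum_ofColLens {a b : ℕ} (hba : b ≤ a) (ham : a ≤ m) :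
    ∑ i, (ofColLens m a b).1 i = a + b := by
  rw [sum_eq_sum_colLen, sum_range_succ, sum_range_one, colLen_ofColLens_zero hba ham,
    colLen_ofColLens_one (hba.trans ham)]

/-- The `j`-th element of the `k`-th chain: the truncated subtraction `j - (m - 2 * k)` keeps the
second column at `k` while the first grows to `m - k`, the `min` then freezes the first. -/
def chainElem (m k j : ℕ) : YoungL m 2 :=
  ofColLens m (min (k + j) (m - k)) (k + (j - (m - 2 * k)))

def chain (m k : ℕ) : List (YoungL m 2) :=
  (List.range (2 * (m - 2 * k) + 1)).map (chainElem m k)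

theorem sum_chainElem {k j : ℕ} (hk : 2 * k ≤ m) (hj : j ≤ 2 * (m - 2 * k)) :
    ∑ i, (chainElem m k j).1 i = 2 * k + j := by
  rw [chainElem, sum_ofColLens (by omega) (by omega)]
  omega

theorem chainElem_covBy {k j : ℕ} (hk : 2 * k ≤ m) (hj : j < 2 * (m - 2 * k)) :
    chainElem m k j ⋖ chainElem m k (j + 1) :=
  CovBy.of_strictMono_of_eq_add_one sum_strictMono (ofColLens_le_ofColLens (by omega) (by omega))
    (by rw [sum_chainElem hk hj, sum_chainElem hk (by omega)]; rfl)

theorem isChain_covBy_chain {k : ℕ} (hk : 2 * k ≤ m) : (chain m k).IsChain (· ⋖ ·) := by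
  rw [chain, List.isChain_map, List.isChain_range_succ]
  exact fun j hj => chainElem_covBy hk hj

theorem chain_ne_nil (m k : ℕ) : chain m k ≠ [] := by
  simp [chain]

theorem sum_head_add_sum_getLast_chain {k : ℕ} (hk : 2 * k ≤ m) :
    ∑ i, ((chain m k).head (chain_ne_nil m k)).1 i +
      ∑ i, ((chain m k).getLast (chain_ne_nil m k)).1 i = m * 2 := by
  simp only [chain, List.head_map, List.getLast_map, List.head_range, List.getLast_range,
    Nat.add_sub_cancel]
  rw [sum_chainElem hk (Nat.zero_le _), sum_chainElem hk le_rfl]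
  omega

theorem mem_chain_iff {k : ℕ} (hk : 2 * k ≤ m) (x : YoungL m 2) :
    x ∈ chain m k ↔ k = min (colLen x 1) (m - colLen x 0) := by
  have hba := colLen_antitone x (Nat.zero_le 1)
  have ham := colLen_le x 0
  simp only [chain, List.mem_map, List.mem_range]
  constructor
  · rintro ⟨j, hj, rfl⟩
    rw [chainElem, colLen_ofColLens_zero (by omega) (by omega),
      colLen_ofColLens_one (by omega)]
    omega
  · intro hkx
    refine ⟨colLen x 0 + colLen x 1 - 2 * k, by omega,
      (congrArg₂ (ofColLens m) ?_ ?_).trans (eq_ofColLens x).symm⟩ <;> omega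

end YoungL

open YoungL in
theorem youngL_m_two_symmetric_chain_decomposition_general (m : ℕ) :
    ∃ S : Set (List (YoungL m 2)),
      (∀ l ∈ S, ∃ hl : l ≠ [],
        l.Chain' (· ⋖ ·) ∧
        (∑ i, (l.head hl).1 i) + (∑ i, (l.getLast hl).1 i) = m * 2) ∧
      ∀ x : YoungL m 2, ∃! l, l ∈ S ∧ x ∈ l := by
  refine ⟨{l | ∃ k, 2 * k ≤ m ∧ l = chain m k}, ?_, fun x => ?_⟩
  · rintro l ⟨k, hk, rfl⟩
    exact ⟨chain_ne_nil m k, isChain_covBy_chain hk,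
      sum_head_add_sum_getLast_chain hk⟩
  · set k := min (colLen x 1) (m - colLen x 0)
    have hk : 2 * k ≤ m := by
      have := colLen_antitone x (Nat.zero_le 1)
      omega
    refine ⟨chain m k, ⟨⟨k, hk, rfl⟩, (mem_chain_iff hk x).2 rfl⟩, ?_⟩
    rintro l ⟨⟨k', hk', rfl⟩, hx⟩
    rw [(mem_chain_iff hk' x).1 hx]

/-- `L(m,2)` admits a symmetric chain decomposition: there is a set `S` of
saturated chains (nonempty lists linked by the covering relation) whose minimum
and maximum elements `x, y` satisfy `|x| + |y| = 2m`, such that every element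
of `L(m,2)` belongs to exactly one chain of `S`. -/
theorem youngL_m_two_symmetric_chain_decomposition (m : ℕ) (hm : 0 < m) :
    ∃ S : Set (List (YoungL m 2)),
      (∀ l ∈ S, ∃ hl : l ≠ [],
        l.Chain' (· ⋖ ·) ∧
        (∑ i, (l.head hl).1 i) + (∑ i, (l.getLast hl).1 i) = m * 2) ∧
      ∀ x : YoungL m 2, ∃! l, l ∈ S ∧ x ∈ l :=
  youngL_m_two_symmetric_chain_decomposition_general m
end

section
/- (Lindström) For every positive integer n, the poset L(3,n) admits a symmetric chain decomposition: there is a partition of the underlying set of L(3,n) into saturated chains such that each chain, with minimum element x and maximum element y, satisfies |x| + |y| = 3n. -/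
/-!
Write a partition in `L(3,n)` as `(a, b, c)` with `n ≥ a ≥ b ≥ c`. Lindström's chains are indexed
by pairs `(j, d)` with `d ≠ 1` and `4j + d ≤ n`: the chain `(j, d)` starts at `(4j + d, j, j)`, of
rank `6j + d`, and raises the parts following the word `b^d (abc)^∞` if `d` is even and
`b^(d-2) c b (acb)^∞` if `d` is odd, stopping just before `a` would exceed `n`. It has
`d + 3(n - 4j - d)` steps, so the ranks of its two ends add up to `3n`. Every partition lies on
exactly one of these chains, and the index of that chain can be read off the partition.
-/

namespace YoungL

variable {m n : ℕ}

lemma sum_lt_sum_of_lt {x y : YoungL m n} (h : x < y) : ∑ i, x.1 i < ∑ i, y.1 i := by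
  obtain ⟨hle, i, hi⟩ := Pi.lt_def.1 (Subtype.coe_lt_coe.2 h)
  exact Finset.sum_lt_sum (fun i _ => hle i) ⟨i, Finset.mem_univ _, hi⟩

lemma covBy_of_le_of_sum_eq {x y : YoungL m n} (hle : x ≤ y)
    (hsum : ∑ i, y.1 i = ∑ i, x.1 i + 1) : x ⋖ y :=
  ⟨hle.lt_of_ne (by rintro rfl; omega), fun _ hxz hzy => by
    have := sum_lt_sum_of_lt hxz
    have := sum_lt_sum_of_lt hzy
    omega⟩

-- Clamped with `min`, so that every triple gives an element of `L(3, n)`.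
def ofTriple (n : ℕ) (p : ℕ × ℕ × ℕ) : YoungL 3 n :=
  ⟨![min p.1 n, min p.2.1 (min p.1 n), min p.2.2 (min p.2.1 (min p.1 n))], by
    refine ⟨by simp [antitone_vecCons], fun i => ?_⟩
    fin_cases i <;> simp⟩

def toTriple (x : YoungL 3 n) : ℕ × ℕ × ℕ := (x.1 0, x.1 1, x.1 2)

lemma ofTriple_mono : Monotone (ofTriple n) := by
  intro p q hpq i
  obtain ⟨h1, h2, h3⟩ : p.1 ≤ q.1 ∧ p.2.1 ≤ q.2.1 ∧ p.2.2 ≤ q.2.2 := ⟨hpq.1, hpq.2.1, hpq.2.2⟩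
  fin_cases i <;> simp [ofTriple] <;> omega

lemma toTriple_ofTriple {a b c : ℕ} (hcb : c ≤ b) (hba : b ≤ a) (han : a ≤ n) :
    toTriple (ofTriple n (a, b, c)) = (a, b, c) := by
  simp [toTriple, ofTriple]; omega

lemma toTriple_antitone (x : YoungL 3 n) :
    (toTriple x).2.2 ≤ (toTriple x).2.1 ∧ (toTriple x).2.1 ≤ (toTriple x).1 :=
  ⟨x.2.1 (by decide : (1 : Fin 3) ≤ 2), x.2.1 (by decide : (0 : Fin 3) ≤ 1)⟩

lemma sum_eq_toTriple (x : YoungL 3 n) :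
    ∑ i, x.1 i = (toTriple x).1 + (toTriple x).2.1 + (toTriple x).2.2 :=
  Fin.sum_univ_three _

lemma ofTriple_toTriple (x : YoungL 3 n) : ofTriple n (toTriple x) = x := by
  obtain ⟨hcb, hba⟩ := toTriple_antitone x
  have han : x.1 0 ≤ n := x.2.2 0
  apply Subtype.ext
  funext i
  fin_cases i <;> simp [ofTriple, toTriple] at * <;> omega

end YoungL

namespace Lindstrom

-- The partition reached after `k` steps of the chain `(j, d)`; thanks to truncated subtraction
-- the quotients vanish until the periodic part of the word is reached.
def point (j d k : ℕ) : ℕ × ℕ × ℕ :=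
  if d % 2 = 0 then
    (4 * j + d + (k + 2 - d) / 3, j + min k d + (k + 1 - d) / 3, j + (k - d) / 3)
  else
    (4 * j + d + (k + 2 - d) / 3, j + min k (d - 2) + (k + 3 - d) / 3, j + (k + 4 - d) / 3)

/- On the initial run of the chain `(j, d)` one has `c = j` and `a = 4j + d`; afterwards
`(a - b, b - c)` only takes the values `(3j, d)`, `(3j + 1, d)`, `(3j, d + 1)` for even `d`, and
`(3j + 1, d - 2)`, `(3j + 2, d - 2)`, `(3j + 2, d - 3)` for odd `d`. In both regimes
`j = min c ⌊(a - b) / 3⌋`. -/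
def index (p : ℕ × ℕ × ℕ) : ℕ × ℕ :=
  let q := (p.1 - p.2.1) / 3
  let r := (p.1 - p.2.1) % 3
  let y := p.2.1 - p.2.2
  if p.2.2 < q ∨ p.2.2 = q ∧ (r = 2 ∨ r = 1 ∧ y % 2 = 1) then (p.2.2, p.1 - 4 * p.2.2)
  else (q, if r = 0 then y - y % 2 else if r = 1 then y + 2 * (y % 2) else y + 3 - y % 2)

def length (n j d : ℕ) : ℕ := d + 3 * (n - 4 * j - d)

variable {j d k : ℕ}

lemma point_sum (hd : d ≠ 1) :
    (point j d k).1 + (point j d k).2.1 + (point j d k).2.2 = 6 * j + d + k := by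
  unfold point; split_ifs <;> dsimp only <;> omega

lemma point_le_point_succ : point j d k ≤ point j d (k + 1) := by
  unfold point; split_ifs <;> simp only [Prod.mk_le_mk] <;> omega

lemma point_antitone (hd : d ≠ 1) :
    (point j d k).2.2 ≤ (point j d k).2.1 ∧ (point j d k).2.1 ≤ (point j d k).1 := by
  unfold point; split_ifs <;> dsimp only <;> omega

lemma fst_point_le_iff {n : ℕ} (h : 4 * j + d ≤ n) : (point j d k).1 ≤ n ↔ k ≤ length n j d := by
  unfold point length; split_ifs <;> dsimp only <;> omega

lemma index_point (hd : d ≠ 1) : index (point j d k) = (j, d) := by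
  unfold point
  split_ifs <;> simp only [index] <;> split_ifs <;> simp only [Prod.mk.injEq] <;> omega

lemma index_snd_ne_one {p : ℕ × ℕ × ℕ} (hcb : p.2.2 ≤ p.2.1) (hba : p.2.1 ≤ p.1) :
    (index p).2 ≠ 1 := by
  simp only [index]; split_ifs <;> omega

lemma four_mul_index_fst_add_snd_le {p : ℕ × ℕ × ℕ} (hcb : p.2.2 ≤ p.2.1) (hba : p.2.1 ≤ p.1) :
    4 * (index p).1 + (index p).2 ≤ p.1 := by
  simp only [index]; split_ifs <;> omega

lemma exists_point_index_eq {p : ℕ × ℕ × ℕ} (hcb : p.2.2 ≤ p.2.1) (hba : p.2.1 ≤ p.1) :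
    ∃ k, point (index p).1 (index p).2 k = p := by
  refine ⟨p.1 + p.2.1 + p.2.2 - (6 * (index p).1 + (index p).2), ?_⟩
  obtain ⟨a, b, c⟩ := p
  dsimp only at hcb hba
  simp only [index]
  split_ifs <;> simp only [point] <;> split_ifs <;> simp only [Prod.mk.injEq] <;> omega

open YoungL

def Admissible (n : ℕ) (i : ℕ × ℕ) : Prop := i.2 ≠ 1 ∧ 4 * i.1 + i.2 ≤ n

def chain (n : ℕ) (i : ℕ × ℕ) : List (YoungL 3 n) :=
  (List.range (length n i.1 i.2 + 1)).map fun k => ofTriple n (point i.1 i.2 k)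

variable {n : ℕ} {i : ℕ × ℕ}

lemma chain_ne_nil : chain n i ≠ [] := by
  simp [chain]

lemma toTriple_ofTriple_point (hi : Admissible n i) (hk : k ≤ length n i.1 i.2) :
    toTriple (ofTriple n (point i.1 i.2 k)) = point i.1 i.2 k :=
  toTriple_ofTriple (point_antitone hi.1).1 (point_antitone hi.1).2
    ((fst_point_le_iff hi.2).2 hk)

lemma sum_ofTriple_point (hi : Admissible n i) (hk : k ≤ length n i.1 i.2) :
    ∑ l, (ofTriple n (point i.1 i.2 k)).1 l = 6 * i.1 + i.2 + k := by
  rw [sum_eq_toTriple, toTriple_ofTriple_point hi hk, point_sum hi.1]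

lemma isChain_covBy_chain (hi : Admissible n i) : (chain n i).IsChain (· ⋖ ·) := by
  rw [chain, List.isChain_map, List.isChain_range_succ]
  intro k hk
  refine covBy_of_le_of_sum_eq (ofTriple_mono point_le_point_succ) ?_
  rw [sum_ofTriple_point hi hk.le, sum_ofTriple_point hi hk]
  rfl

lemma sum_head_add_sum_getLast_chain (hi : Admissible n i) (hl : chain n i ≠ []) :
    ∑ l, ((chain n i).head hl).1 l + ∑ l, ((chain n i).getLast hl).1 l = 3 * n := by
  simp only [chain, List.head_map, List.getLast_map, List.head_range, List.getLast_range,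
    Nat.add_sub_cancel]
  rw [sum_ofTriple_point hi (Nat.zero_le _), sum_ofTriple_point hi le_rfl, length]
  have := hi.2
  omega

lemma admissible_index (x : YoungL 3 n) : Admissible n (index (toTriple x)) := by
  obtain ⟨hcb, hba⟩ := toTriple_antitone x
  exact ⟨index_snd_ne_one hcb hba, (four_mul_index_fst_add_snd_le hcb hba).trans (x.2.2 0)⟩

lemma mem_chain_iff {x : YoungL 3 n} (hi : Admissible n i) :
    x ∈ chain n i ↔ index (toTriple x) = i := by
  constructor
  · simp only [chain, List.mem_map, List.mem_range]
    rintro ⟨k, hk, rfl⟩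
    rw [toTriple_ofTriple_point hi (Nat.lt_succ_iff.1 hk), index_point hi.1]
  · rintro rfl
    obtain ⟨k, hk⟩ := exists_point_index_eq (toTriple_antitone x).1 (toTriple_antitone x).2
    simp only [chain, List.mem_map, List.mem_range]
    refine ⟨k, Nat.lt_succ_iff.2 ((fst_point_le_iff hi.2).1 (by rw [hk]; exact x.2.2 0)), ?_⟩
    rw [hk, ofTriple_toTriple]

end Lindstrom

open Lindstrom YoungL

theorem youngL_three_n_symmetric_chain_decomposition_general (n : ℕ) :
    ∃ S : Set (List (YoungL 3 n)),
      (∀ l ∈ S, ∃ hl : l ≠ [],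
        l.Chain' (· ⋖ ·) ∧
        (∑ i, (l.head hl).1 i) + (∑ i, (l.getLast hl).1 i) = 3 * n) ∧
      ∀ x : YoungL 3 n, ∃! l, l ∈ S ∧ x ∈ l := by
  refine ⟨chain n '' {i | Admissible n i}, ?_, fun x => ?_⟩
  · rintro _ ⟨i, hi, rfl⟩
    exact ⟨chain_ne_nil, isChain_covBy_chain hi, sum_head_add_sum_getLast_chain hi _⟩
  · refine ⟨chain n (index (toTriple x)),
      ⟨⟨_, admissible_index x, rfl⟩, (mem_chain_iff (admissible_index x)).2 rfl⟩, ?_⟩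
    rintro _ ⟨⟨i, hi, rfl⟩, hx⟩
    rw [(mem_chain_iff hi).1 hx]

/-- (Lindström) `L(3,n)` admits a symmetric chain decomposition: there is a set
`S` of saturated chains (nonempty lists linked by the covering relation) whose
minimum and maximum elements `x, y` satisfy `|x| + |y| = 3n`, such that every
element of `L(3,n)` belongs to exactly one chain of `S`. -/
theorem youngL_three_n_symmetric_chain_decomposition (n : ℕ) (hn : 0 < n) :
    ∃ S : Set (List (YoungL 3 n)),
      (∀ l ∈ S, ∃ hl : l ≠ [],
        l.Chain' (· ⋖ ·) ∧
        (∑ i, (l.head hl).1 i) + (∑ i, (l.getLast hl).1 i) = 3 * n) ∧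
      ∀ x : YoungL 3 n, ∃! l, l ∈ S ∧ x ∈ l :=
  youngL_three_n_symmetric_chain_decomposition_general n
end
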